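/- Assume the function u: A → B is injective. For every 0 ≤ i ≤ m, the functor given by post-composition with Q restricts to a functor Q_!: Nec^tnd(C(μ,u))_{i,m+1} → Nec^tnd(Δ[m+1])_{i,m+1} between the categories of totally non-degenerate necklaces, and this restricted functor is a discrete fibration. -/

import Mathlib

/-!
Postcomposition with any map `q : K ⟶ L` is a discrete fibration on necklaces: a morphism
`g : T ⟶ q ∘ S` of necklaces in `L` is a map of shapes, and `g` itself, viewed as a morphism
`S ∘ g ⟶ S`, is its unique lift. As `q` maps degenerate simplices to degenerate ones, the lift of
a totally non-degenerate necklace is totally non-degenerate.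

What remains is that `Q` preserves total non-degeneracy, i.e. sends non-degenerate simplices of
`C(μ,u)` to non-degenerate ones. Every simplex of `C(μ,u)` comes from a copy of `Δ[m]`,
`Δ[l+1]` or `Δ[0]`, on which `Q` is induced by the monomorphism `d^{m+1}`, `μ+1` or a vertex;
a simplex non-degenerate in `C(μ,u)` is non-degenerate in its copy, hence is an injective map,
and so is its composite with that monomorphism.
-/

open CategoryTheory Simplicial Opposite Limits

set_option synthInstance.maxHeartbeats 1000000
set_option maxHeartbeats 1000000

namespace Paper

/-- A simplex is degenerate if it is the image of a strictly lower-dimensional simplex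
under a surjective simplicial operator. -/
def IsDegenerate (X : SSet) {n : ℕ} (x : X.obj (op (SimplexCategory.mk n))) : Prop :=
  ∃ (k : ℕ) (f : SimplexCategory.mk n ⟶ SimplexCategory.mk k)
    (y : X.obj (op (SimplexCategory.mk k))),
      k < n ∧ Function.Surjective f.toOrderHom ∧ X.map f.op y = x

/-- The combinatorial data of a necklace `Δ[m₁] ∨ ⋯ ∨ Δ[mₜ]`. -/
structure Necklace where
  beads : List ℕ
  ne : beads ≠ []
  pos : 1 < beads.length → ∀ x ∈ beads, 0 < x

namespace Necklace

/-- The index of the last vertex of the necklace. -/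
def total (N : Necklace) : ℕ := N.beads.sum

/-- The position of the `j`-th joint of the necklace. -/
def cum (N : Necklace) (j : ℕ) : ℕ := (N.beads.take j).sum

lemma cum_le_total (N : Necklace) (j : ℕ) : N.cum j ≤ N.total := by
  have := List.sum_take_add_sum_drop N.beads j
  unfold cum total
  omega

lemma cum_succ_eq (N : Necklace) {j : ℕ} (hj : j < N.beads.length) :
    N.cum (j + 1) = N.cum j + N.beads.get ⟨j, hj⟩ :=
  List.sum_take_succ _ _ _

private lemma exists_interval : ∀ (l : List ℕ), l ≠ [] → ∀ k : ℕ, k ≤ l.sum →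
    ∃ j, j < l.length ∧ (l.take j).sum ≤ k ∧ k ≤ (l.take (j + 1)).sum := by
  intro l
  induction l with
  | nil => intro h; exact absurd rfl h
  | cons a t ih =>
    intro _ k hk
    by_cases hka : k ≤ a
    · exact ⟨0, by simp, by simp, by simpa using hka⟩
    · push_neg at hka
      rcases eq_or_ne t [] with rfl | ht
      · simp only [List.sum_cons, List.sum_nil, Nat.add_zero] at hk
        omega
      · simp only [List.sum_cons] at hk
        obtain ⟨j, hj, h1, h2⟩ := ih ht (k - a) (by omega)
        refine ⟨j + 1, by simp only [List.length_cons]; omega, ?_, ?_⟩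
        · simp only [List.take_succ_cons, List.sum_cons]
          omega
        · simp only [List.take_succ_cons, List.sum_cons]
          omega

/-- The predicate: a simplex of `Δ[N.total]` lies in the `j`-th bead. -/
def InBead (N : Necklace) (j : ℕ) {x : SimplexCategory}
    (σ : x ⟶ SimplexCategory.mk N.total) : Prop :=
  ∀ i, N.cum j ≤ (σ.toOrderHom i : ℕ) ∧ (σ.toOrderHom i : ℕ) ≤ N.cum (j + 1)

/-- The predicate defining the simplices of the necklace, as a subcomplex of
`Δ[N.total]`: those simplices contained in some bead. -/
def IsSimplex (N : Necklace) {x : SimplexCategory}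
    (σ : x ⟶ SimplexCategory.mk N.total) : Prop :=
  ∃ j, j < N.beads.length ∧ N.InBead j σ

/-- The simplicial set `Δ[m₁] ∨ ⋯ ∨ Δ[mₜ]` associated to a necklace, realized as the
subcomplex of `Δ[N.total]` consisting of the simplices lying in one of the beads. -/
def toSSet (N : Necklace) : SSet where
  obj X := { σ : X.unop ⟶ SimplexCategory.mk N.total // N.IsSimplex σ }
  map f := TypeCat.ofHom fun σ => ⟨f.unop ≫ σ.1, by
    obtain ⟨j, hj, hb⟩ := σ.2
    exact ⟨j, hj, fun i => hb _⟩⟩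
  map_id X := by
    ext σ : 3
    exact Subtype.ext (Category.id_comp _)
  map_comp f g := by
    ext σ : 3
    exact Subtype.ext rfl

/-- The vertices of a necklace. -/
def vertex (N : Necklace) (k : Fin (N.total + 1)) :
    N.toSSet.obj (op (SimplexCategory.mk 0)) :=
  ⟨SimplexCategory.Hom.mk (OrderHom.const _ k), by
    obtain ⟨j, hj, h1, h2⟩ := exists_interval N.beads N.ne k (Nat.lt_succ_iff.mp k.isLt)
    exact ⟨j, hj, fun _ => ⟨h1, h2⟩⟩⟩

/-- A simplex of a necklace lies in the last bead. -/
def InLastBead (N : Necklace) {x : SimplexCategoryᵒᵖ} (σ : N.toSSet.obj x) : Prop :=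
  ∀ i, N.cum (N.beads.length - 1) ≤ (σ.1.toOrderHom i : ℕ)

/-- The `j`-th bead of a necklace, as a simplex of the necklace. -/
def beadSimplex (N : Necklace) (j : ℕ) (hj : j < N.beads.length) :
    N.toSSet.obj (op (SimplexCategory.mk (N.beads.get ⟨j, hj⟩))) :=
  ⟨SimplexCategory.Hom.mk
    { toFun := fun i => ⟨N.cum j + i, by
        have h1 := N.cum_succ_eq hj
        have h2 := N.cum_le_total (j + 1)
        have h3 := i.isLt
        simp only [List.get_eq_getElem, SimplexCategory.len_mk] at h1 h3 ⊢
        omega⟩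
      monotone' := fun i i' hii' => Nat.add_le_add_left hii' _ },
   ⟨j, hj, fun i => by
      refine ⟨Nat.le_add_right _ _, ?_⟩
      have h1 := N.cum_succ_eq hj
      have h3 := Nat.lt_succ_iff.mp i.isLt
      simp only [List.get_eq_getElem, SimplexCategory.len_mk] at h1 h3
      show N.cum j + (i : ℕ) ≤ N.cum (j + 1)
      omega⟩⟩

end Necklace

/-- A necklace in a simplicial set `K` from `a` to `b`: a bi-pointed map from a necklace. -/
structure NecklaceIn (K : SSet) (a b : K.obj (op (SimplexCategory.mk 0))) where
  shape : Necklace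
  map : shape.toSSet ⟶ K
  hα : map.app (op (SimplexCategory.mk 0)) (shape.vertex 0) = a
  hω : map.app (op (SimplexCategory.mk 0)) (shape.vertex (Fin.last _)) = b

namespace NecklaceIn

variable {K : SSet} {a b : K.obj (op (SimplexCategory.mk 0))}

/-- Morphisms of necklaces in `K` from `a` to `b`: bi-pointed maps of necklaces over `K`. -/
structure NecHom (S T : NecklaceIn K a b) where
  g : S.shape.toSSet ⟶ T.shape.toSSet
  hα : g.app (op (SimplexCategory.mk 0)) (S.shape.vertex 0) = T.shape.vertex 0
  hω : g.app (op (SimplexCategory.mk 0)) (S.shape.vertex (Fin.last _)) =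
        T.shape.vertex (Fin.last _)
  w : g ≫ T.map = S.map

lemma NecHom.ext' {S T : NecklaceIn K a b} {f g : NecHom S T} (h : f.g = g.g) : f = g := by
  cases f; cases g; cases h; rfl

instance : Category (NecklaceIn K a b) where
  Hom := NecHom
  id S := ⟨𝟙 _, rfl, rfl, Category.id_comp _⟩
  comp {S T U} f g := ⟨f.g ≫ g.g,
    by rw [FunctorToTypes.comp, f.hα, g.hα],
    by rw [FunctorToTypes.comp, f.hω, g.hω],
    by rw [Category.assoc, g.w, f.w]⟩
  id_comp f := NecHom.ext' (Category.id_comp _)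
  comp_id f := NecHom.ext' (Category.comp_id _)
  assoc f g h := NecHom.ext' (Category.assoc _ _ _)

end NecklaceIn

/-- Post-composition with a map of simplicial sets, as a functor between categories of
necklaces. -/
def postcomp {K L : SSet} (q : K ⟶ L) (a b : K.obj (op (SimplexCategory.mk 0))) :
    NecklaceIn K a b ⥤
      NecklaceIn L (q.app (op (SimplexCategory.mk 0)) a) (q.app (op (SimplexCategory.mk 0)) b) where
  obj S := ⟨S.shape, S.map ≫ q,
    by rw [FunctorToTypes.comp, S.hα],
    by rw [FunctorToTypes.comp, S.hω]⟩
  map {S T} f := ⟨f.g, f.hα, f.hω, by rw [← Category.assoc]; exact congrArg (· ≫ q) f.w⟩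
  map_id S := NecklaceIn.NecHom.ext' rfl
  map_comp f g := NecklaceIn.NecHom.ext' rfl

/-- A necklace in `K` is totally non-degenerate if each of its beads is a
non-degenerate simplex of `K`. -/
def TotallyNondeg {K : SSet} {a b : K.obj (op (SimplexCategory.mk 0))}
    (S : NecklaceIn K a b) : Prop :=
  ∀ (j : ℕ) (hj : j < S.shape.beads.length),
    ¬ IsDegenerate K
      (S.map.app (op (SimplexCategory.mk (S.shape.beads.get ⟨j, hj⟩)))
        (S.shape.beadSimplex j hj))

/-- A functor is a discrete fibration if every morphism into the image of an object
admits a unique lift with prescribed codomain. -/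
def IsDiscreteFibration {E C : Type*} [Category E] [Category C] (p : E ⥤ C) : Prop :=
  ∀ (e : E) (c : C) (g : c ⟶ p.obj e),
    ∃! φ : Σ e' : E, e' ⟶ e, ∃ h : p.obj φ.1 = c, p.map φ.2 = eqToHom h ≫ g

/-- The vertex `k` of the standard simplex `Δ[q]`, as a `0`-simplex. -/
def vertStd (q : ℕ) (k : Fin (q + 1)) : (Δ[q] : SSet).obj (op (SimplexCategory.mk 0)) :=
  (SSet.stdSimplex.objEquiv).symm (SimplexCategory.const _ _ k)

/-- The vertex of `Δ[q]` underlying a `0`-simplex of `Δ[q]`. -/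
def vertexOf (q : ℕ) (s : (Δ[q] : SSet).obj (op (SimplexCategory.mk 0))) : Fin (q + 1) :=
  (SSet.stdSimplex.objEquiv s).toOrderHom 0


/-- The vertex `k` of `Δ[q]`, as a map `Δ[0] ⟶ Δ[q]`. -/
def stdVert (q : ℕ) (k : Fin (q + 1)) : (Δ[0] : SSet) ⟶ (Δ[q] : SSet) :=
  SSet.stdSimplex.map (SimplexCategory.const _ _ k)

lemma isDegenerate_iff_mem_degenerate {X : SSet} {n : ℕ}
    (x : X.obj (op (SimplexCategory.mk n))) : IsDegenerate X x ↔ x ∈ X.degenerate n := by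
  rw [SSet.mem_degenerate_iff]
  constructor
  · rintro ⟨k, f, y, hk, hf, rfl⟩
    exact ⟨k, hk, f, SimplexCategory.epi_iff_surjective.2 hf, y, rfl⟩
  · rintro ⟨k, hk, f, hf, y, rfl⟩
    exact ⟨k, f, y, hk, SimplexCategory.epi_iff_surjective.1 hf, rfl⟩

lemma IsDegenerate.map {X Y : SSet} (q : X ⟶ Y) {n : ℕ}
    {x : X.obj (op (SimplexCategory.mk n))} (hx : IsDegenerate X x) :
    IsDegenerate Y (q.app _ x) := by
  rw [isDegenerate_iff_mem_degenerate] at hx ⊢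
  exact SSet.degenerate_app_apply hx q

lemma not_isDegenerate_of_comp_eq_stdSimplex_map {X : SSet} {k p n : ℕ} (ι : Δ[k] ⟶ X)
    (q : X ⟶ Δ[p]) (f : SimplexCategory.mk k ⟶ SimplexCategory.mk p) [Mono f]
    (h : ι ≫ q = SSet.stdSimplex.map f) (σ : (Δ[k] : SSet).obj (op (SimplexCategory.mk n)))
    (hσ : ¬ IsDegenerate X (ι.app _ σ)) : ¬ IsDegenerate Δ[p] (q.app _ (ι.app _ σ)) := by
  have hσ' : σ ∈ Δ[k].nonDegenerate n := fun hdeg =>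
    hσ ((isDegenerate_iff_mem_degenerate _).2 (SSet.degenerate_app_apply hdeg ι))
  rw [SSet.stdSimplex.mem_nonDegenerate_iff_mono] at hσ'
  rw [isDegenerate_iff_mem_degenerate, ← NatTrans.comp_app_apply, h,
    ← SSet.mem_nonDegenerate_iff_notMem_degenerate, SSet.stdSimplex.mem_nonDegenerate_iff_mono]
  exact mono_comp (SSet.stdSimplex.objEquiv σ) f

lemma sigma_mk_eq_mk_iff_eqToHom {C : Type*} [Category C] {X Y Z : C} (f : X ⟶ Z) (g : Y ⟶ Z) :
    (⟨X, f⟩ : Σ X, X ⟶ Z) = ⟨Y, g⟩ ↔ ∃ h : X = Y, f = eqToHom h ≫ g := by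
  constructor
  · rintro ⟨⟩
    exact ⟨rfl, by simp⟩
  · rintro ⟨rfl, rfl⟩
    simp

lemma isDiscreteFibration_of_bijective {E C : Type*} [Category E] [Category C] (p : E ⥤ C)
    (hp : ∀ e : E, Function.Bijective
      fun φ : Σ e' : E, e' ⟶ e => (⟨p.obj φ.1, p.map φ.2⟩ : Σ c : C, c ⟶ p.obj e)) :
    IsDiscreteFibration p := by
  intro e c g
  simp_rw [← sigma_mk_eq_mk_iff_eqToHom]
  exact (hp e).existsUnique ⟨c, g⟩

namespace NecklaceIn

variable {K L : SSet} (q : K ⟶ L) {a b : K.obj (op (SimplexCategory.mk 0))}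

def liftAlong (S : NecklaceIn K a b) {T : NecklaceIn L (q.app _ a) (q.app _ b)}
    (g : T ⟶ (postcomp q a b).obj S) : NecklaceIn K a b where
  shape := T.shape
  map := g.g ≫ S.map
  hα := (congrArg (fun x => S.map.app _ x) g.hα).trans S.hα
  hω := (congrArg (fun x => S.map.app _ x) g.hω).trans S.hω

def liftAlongHom (S : NecklaceIn K a b) {T : NecklaceIn L (q.app _ a) (q.app _ b)}
    (g : T ⟶ (postcomp q a b).obj S) : liftAlong q S g ⟶ S :=
  ⟨g.g, g.hα, g.hω, rfl⟩

end NecklaceIn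

section TotallyNondeg

variable {K L : SSet} (q : K ⟶ L) {a b : K.obj (op (SimplexCategory.mk 0))}

lemma TotallyNondeg.postcomp_obj
    (hq : ∀ (n : ℕ) (x : K.obj (op (SimplexCategory.mk n))),
      ¬ IsDegenerate K x → ¬ IsDegenerate L (q.app _ x))
    {S : NecklaceIn K a b} (hS : TotallyNondeg S) : TotallyNondeg ((postcomp q a b).obj S) :=
  fun j hj => hq _ _ (hS j hj)

lemma TotallyNondeg.liftAlong {S : NecklaceIn K a b} {T : NecklaceIn L (q.app _ a) (q.app _ b)}
    (g : T ⟶ (postcomp q a b).obj S) (hT : TotallyNondeg T) :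
    TotallyNondeg (NecklaceIn.liftAlong q S g) := by
  intro j hj hdeg
  apply hT j hj
  rw [← g.w]
  exact hdeg.map q

theorem isDiscreteFibration_postcomp_totallyNondeg
    (hpres : ∀ S : NecklaceIn K a b, TotallyNondeg S → TotallyNondeg ((postcomp q a b).obj S)) :
    IsDiscreteFibration
      (ObjectProperty.lift (fun T => TotallyNondeg T)
        (ObjectProperty.ι (fun S => TotallyNondeg S) ⋙ postcomp q a b)
        (fun S => hpres S.obj S.property)) := by
  refine isDiscreteFibration_of_bijective _ fun e => Function.bijective_iff_has_inverse.2
    ⟨fun φ => ⟨⟨NecklaceIn.liftAlong q e.obj φ.2.hom,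
        TotallyNondeg.liftAlong q φ.2.hom φ.1.property⟩,
      ⟨NecklaceIn.liftAlongHom q e.obj φ.2.hom⟩⟩, ?_, ?_⟩
  · rintro ⟨⟨⟨N, f, hα, hω⟩, hf⟩, ⟨⟨g, hgα, hgω, hw⟩⟩⟩
    -- the types of `g`, `hgα`, `hgω` mention `f` through unreduced projections, blocking `subst`
    dsimp only at g hgα hgω hw
    subst hw
    rfl
  · rintro ⟨⟨⟨N, f, hα, hω⟩, hf⟩, ⟨⟨g, hgα, hgω, hw⟩⟩⟩
    dsimp only at g hgα hgω hw
    subst hw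
    rfl

end TotallyNondeg
section Cone

variable (A B : Type) (u : A → B) (l m : ℕ)
  (μ : SimplexCategory.mk l ⟶ SimplexCategory.mk m)

/-- The map `∐_{a ∈ A} Δ[l] ⟶ ∐_{b ∈ B} Δ[m]` sending the copy of `Δ[l]` indexed by `a`
into the copy of `Δ[m]` indexed by `u a` via `μ`. -/
noncomputable def toLB : (∐ fun _ : A => (Δ[l] : SSet)) ⟶ (∐ fun _ : B => (Δ[m] : SSet)) :=
  Sigma.desc fun a => SSet.stdSimplex.map μ ≫ Sigma.ι (fun _ : B => (Δ[m] : SSet)) (u a)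

/-- The map `∐_{a ∈ A} Δ[l] ⟶ ∐_{a ∈ A} Δ[l+1]` given on each summand by the face
`d^{l+1}`. -/
noncomputable def toLA1 : (∐ fun _ : A => (Δ[l] : SSet)) ⟶ (∐ fun _ : A => (Δ[l+1] : SSet)) :=
  Sigma.desc fun a =>
    SSet.stdSimplex.map (SimplexCategory.δ (Fin.last (l + 1))) ≫
      Sigma.ι (fun _ : A => (Δ[l+1] : SSet)) a

/-- The amalgam `(∐_{b ∈ B} Δ[m]) ⊔_{∐_{a ∈ A} Δ[l]} (∐_{a ∈ A} Δ[l+1])`. -/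
noncomputable def LL : SSet := pushout (toLB A B u l m μ) (toLA1 A l)

/-- The left leg of the defining span of `C(μ,u)`: it picks, in the `(i,b)`-summand, the
vertex `i` of the copy of `Δ[m]` indexed by `b`, and in the `a`-summand the vertex `l+1`
of the copy of `Δ[l+1]` indexed by `a`. -/
noncomputable def midToL :
    (∐ fun _ : ((Fin (m + 1) × B) ⊕ A) => (Δ[0] : SSet)) ⟶ LL A B u l m μ :=
  Sigma.desc fun (x : (Fin (m + 1) × B) ⊕ A) =>
    match x with
    | Sum.inl (i, b) => stdVert m i ≫ Sigma.ι (fun _ : B => (Δ[m] : SSet)) b ≫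
        pushout.inl (toLB A B u l m μ) (toLA1 A l)
    | Sum.inr a => stdVert (l + 1) (Fin.last (l + 1)) ≫
        Sigma.ι (fun _ : A => (Δ[l+1] : SSet)) a ≫
        pushout.inr (toLB A B u l m μ) (toLA1 A l)

/-- The right leg of the defining span of `C(μ,u)`: it sends the `(i,b)`-summands to the
point indexed by `i` and the `a`-summands to the point indexed by `m+1`. -/
noncomputable def midToR :
    (∐ fun _ : ((Fin (m + 1) × B) ⊕ A) => (Δ[0] : SSet)) ⟶
      (∐ fun _ : Fin (m + 2) => (Δ[0] : SSet)) :=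
  Sigma.desc fun (x : (Fin (m + 1) × B) ⊕ A) =>
    match x with
    | Sum.inl (i, _) => Sigma.ι (fun _ : Fin (m + 2) => (Δ[0] : SSet)) i.castSucc
    | Sum.inr _ => Sigma.ι (fun _ : Fin (m + 2) => (Δ[0] : SSet)) (Fin.last (m + 1))

/-- The simplicial set `C(μ,u)`, defined as the pushout of the span with legs `midToL`
and `midToR`. -/
noncomputable def CC : SSet := pushout (midToL A B u l m μ) (midToR A B m)

/-- The vertices `0, 1, …, m+1` of `C(μ,u)`, i.e. the images of the points of
`∐_{0 ≤ i ≤ m+1} Δ[0]` under the canonical map to the pushout. -/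
noncomputable def vertC (i : Fin (m + 2)) :
    (CC A B u l m μ).obj (op (SimplexCategory.mk 0)) :=
  (Sigma.ι (fun _ : Fin (m + 2) => (Δ[0] : SSet)) i ≫
      pushout.inr (midToL A B u l m μ) (midToR A B m)).app
    (op (SimplexCategory.mk 0)) (vertStd 0 0)

/-- The map `μ + 1 : [l+1] ⟶ [m+1]` extending `μ` by sending `l+1` to `m+1`. -/
def muPlus : SimplexCategory.mk (l + 1) ⟶ SimplexCategory.mk (m + 1) :=
  SimplexCategory.Hom.mk
    { toFun := fun i =>
        if h : (i : ℕ) < l + 1 then (μ.toOrderHom ⟨(i : ℕ), h⟩).castSucc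
        else Fin.last (m + 1)
      monotone' := by
        intro i j hij
        by_cases hi : (i : ℕ) < l + 1 <;> by_cases hj : (j : ℕ) < l + 1
        · simp only [hi, hj, dif_pos]
          exact Fin.castSucc_le_castSucc_iff.mpr (μ.toOrderHom.monotone hij)
        · simp only [hi, hj, dif_pos, dif_neg, not_false_iff]
          exact Fin.le_last _
        · exfalso
          have h' : (i : ℕ) ≤ (j : ℕ) := hij
          omega
        · simp only [hi, hj, dif_neg, not_false_iff]
          exact le_refl _ }


lemma mono_muPlus (hμ : Function.Injective μ.toOrderHom) : Mono (muPlus l m μ) := by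
  rw [SimplexCategory.mono_iff_injective]
  intro x y hxy
  simp only [muPlus, SimplexCategory.Hom.toOrderHom_mk, OrderHom.coe_mk] at hxy
  split_ifs at hxy with hx hy hy
  · simpa [Fin.ext_iff] using hμ (Fin.castSucc_injective _ hxy)
  · exact absurd hxy (Fin.castSucc_ne_last _)
  · exact absurd hxy.symm (Fin.castSucc_ne_last _)
  · exact Fin.ext (by omega)

theorem CC.not_isDegenerate_app (hμ : Function.Injective μ.toOrderHom)
    (Q : CC A B u l m μ ⟶ (Δ[m+1] : SSet))
    (hQB : ∀ b : B,
      Sigma.ι (fun _ : B => (Δ[m] : SSet)) b ≫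
        pushout.inl (toLB A B u l m μ) (toLA1 A l) ≫
        pushout.inl (midToL A B u l m μ) (midToR A B m) ≫ Q =
      SSet.stdSimplex.map (SimplexCategory.δ (Fin.last (m + 1))))
    (hQA : ∀ a : A,
      Sigma.ι (fun _ : A => (Δ[l+1] : SSet)) a ≫
        pushout.inr (toLB A B u l m μ) (toLA1 A l) ≫
        pushout.inl (midToL A B u l m μ) (midToR A B m) ≫ Q =
      SSet.stdSimplex.map (muPlus l m μ))
    (hQR : ∀ i : Fin (m + 2),
      Sigma.ι (fun _ : Fin (m + 2) => (Δ[0] : SSet)) i ≫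
        pushout.inr (midToL A B u l m μ) (midToR A B m) ≫ Q =
      stdVert (m + 1) i)
    (n : ℕ) (x : (CC A B u l m μ).obj (op (SimplexCategory.mk n)))
    (hx : ¬ IsDegenerate _ x) : ¬ IsDegenerate Δ[m+1] (Q.app _ x) := by
  obtain ⟨y, rfl⟩ | ⟨z, rfl⟩ :=
    Types.eq_or_eq_of_isPushout ((IsPushout.of_hasPushout _ _).app _) x
  · obtain ⟨w, rfl⟩ | ⟨w, rfl⟩ :=
      Types.eq_or_eq_of_isPushout ((IsPushout.of_hasPushout _ _).app _) y
    · obtain ⟨⟨b⟩, σ, rfl⟩ := FunctorToTypes.jointly_surjective' _ _ w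
      exact not_isDegenerate_of_comp_eq_stdSimplex_map
        (Sigma.ι (fun _ : B => (Δ[m] : SSet)) b ≫ pushout.inl _ _ ≫ pushout.inl _ _) Q _
        (hQB b) σ hx
    · obtain ⟨⟨a⟩, τ, rfl⟩ := FunctorToTypes.jointly_surjective' _ _ w
      have := mono_muPlus l m μ hμ
      exact not_isDegenerate_of_comp_eq_stdSimplex_map
        (Sigma.ι (fun _ : A => (Δ[l+1] : SSet)) a ≫ pushout.inr _ _ ≫ pushout.inl _ _) Q _
        (hQA a) τ hx
  · obtain ⟨⟨i⟩, v, rfl⟩ := FunctorToTypes.jointly_surjective' _ _ z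
    have : Mono (SimplexCategory.const (SimplexCategory.mk 0) (SimplexCategory.mk (m + 1)) i) :=
      SimplexCategory.mono_iff_injective.2 fun _ _ _ => Subsingleton.elim (α := Fin 1) _ _
    exact not_isDegenerate_of_comp_eq_stdSimplex_map
      (Sigma.ι (fun _ : Fin (m + 2) => (Δ[0] : SSet)) i ≫ pushout.inr _ _) Q
      (SimplexCategory.const _ _ i)
      (hQR i) v hx

theorem statement_6 (hμ : Function.Injective μ.toOrderHom)
    (i : Fin (m + 1))
    (Q : CC A B u l m μ ⟶ (Δ[m+1] : SSet))
    (hQB : ∀ b : B,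
      Sigma.ι (fun _ : B => (Δ[m] : SSet)) b ≫
        pushout.inl (toLB A B u l m μ) (toLA1 A l) ≫
        pushout.inl (midToL A B u l m μ) (midToR A B m) ≫ Q =
      SSet.stdSimplex.map (SimplexCategory.δ (Fin.last (m + 1))))
    (hQA : ∀ a : A,
      Sigma.ι (fun _ : A => (Δ[l+1] : SSet)) a ≫
        pushout.inr (toLB A B u l m μ) (toLA1 A l) ≫
        pushout.inl (midToL A B u l m μ) (midToR A B m) ≫ Q =
      SSet.stdSimplex.map (muPlus l m μ))
    (hQR : ∀ i : Fin (m + 2),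
      Sigma.ι (fun _ : Fin (m + 2) => (Δ[0] : SSet)) i ≫
        pushout.inr (midToL A B u l m μ) (midToR A B m) ≫ Q =
      stdVert (m + 1) i)
    :
    ∃ hpres : ∀ S : NecklaceIn (CC A B u l m μ) (vertC A B u l m μ i.castSucc)
        (vertC A B u l m μ (Fin.last (m + 1))),
        TotallyNondeg S →
          TotallyNondeg
            ((postcomp Q (vertC A B u l m μ i.castSucc)
              (vertC A B u l m μ (Fin.last (m + 1)))).obj S),
      IsDiscreteFibration
        (ObjectProperty.lift (fun T => TotallyNondeg T)
          (ObjectProperty.ι (fun S => TotallyNondeg S) ⋙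
            postcomp Q (vertC A B u l m μ i.castSucc)
              (vertC A B u l m μ (Fin.last (m + 1))))
          (fun S => hpres S.obj S.property)) :=
  ⟨fun _ hS => hS.postcomp_obj Q (CC.not_isDegenerate_app A B u l m μ hμ Q hQB hQA hQR),
    isDiscreteFibration_postcomp_totallyNondeg Q _⟩

end Cone

end Paper
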